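/- arXiv:2109.02845 — 2 statements merged into one kernel-verified Lean document; each statement's English description precedes it below -/
import Mathlib

section
/- For every α∈(0,1), τ>0 and ζ∈ℂ with 0<|ζ|<1, the series Σ_{j=0}^∞ d_j^{(α)} ζ^j converges absolutely and Σ_{j=0}^∞ d_j^{(α)} ζ^j = (τ^{−α}/Γ(2−α)) · ((1−ζ)²/ζ) · Σ_{j=1}^∞ j^{1−α} ζ^j, where the last series is the polylogarithm Li_{α−1}(ζ) = Σ_{j=1}^∞ ζ^j/j^{α−1}. -/
/-!
With `A j = j ^ (1 - α)` (so `A 0 = 0`), the L1 weights are a second difference,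
`d j = τ^(-α)/Γ(2-α) · (A (j+1) - 2 A j + A (j-1))`, and the two shifts `j ↦ j ± 1` of the
coefficients of a power series `∑ A j ζ^j` multiply its sum by `ζ⁻¹` and `ζ`, so the second
difference multiplies it by `ζ⁻¹ - 2 + ζ = (1 - ζ)² / ζ`.
-/

open Filter

section ShiftedPowerSeries

variable {𝕜 : Type*} [NormedField 𝕜] {a : ℕ → 𝕜} {z S : 𝕜}

theorem hasSum_succ_mul_pow (ha : a 0 = 0) (hz : z ≠ 0)
    (h : HasSum (fun j => a j * z ^ j) S) : HasSum (fun j => a (j + 1) * z ^ j) (z⁻¹ * S) := by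
  have hshift : HasSum (fun j => a (j + 1) * z ^ (j + 1)) S := by
    simpa [ha] using (hasSum_nat_add_iff' 1).mpr h
  have hterm : (fun j => a (j + 1) * z ^ j) = fun j => z⁻¹ * (a (j + 1) * z ^ (j + 1)) := by
    ext j
    field_simp
    ring
  rw [hterm]
  exact hshift.mul_left z⁻¹

theorem hasSum_pred_mul_pow (ha : a 0 = 0) (h : HasSum (fun j => a j * z ^ j) S) :
    HasSum (fun j => a (j - 1) * z ^ j) (z * S) := by
  have hterm : (fun j => a (j + 1 - 1) * z ^ (j + 1)) = fun j => z * (a j * z ^ j) := by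
    ext j
    rw [Nat.add_sub_cancel, pow_succ]
    ring
  rw [← hasSum_nat_add_iff' 1, hterm]
  simpa [ha] using h.mul_left z

-- `a (j - 1)` uses truncated subtraction: at `j = 0` the coefficient is `a 1 - a 0`.
theorem hasSum_secondDiff_mul_pow (ha : a 0 = 0) (hz : z ≠ 0)
    (h : HasSum (fun j => a j * z ^ j) S) :
    HasSum (fun j => (a (j + 1) - 2 * a j + a (j - 1)) * z ^ j) ((1 - z) ^ 2 / z * S) := by
  have hsum := ((hasSum_succ_mul_pow ha hz h).sub (h.mul_left 2)).add (hasSum_pred_mul_pow ha h)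
  have hvalue : z⁻¹ * S - 2 * S + z * S = (1 - z) ^ 2 / z * S := by
    field_simp
    ring
  simpa only [hvalue, sub_mul, add_mul, mul_assoc] using hsum

end ShiftedPowerSeries

theorem summable_rpow_mul_pow (s : ℝ) {z : ℂ} (hz : ‖z‖ < 1) :
    Summable (fun j : ℕ => (((j : ℝ) ^ s : ℝ) : ℂ) * z ^ j) := by
  obtain ⟨k, hk⟩ := exists_nat_ge s
  refine .of_norm_bounded_eventually_nat
    (summable_pow_mul_geometric_of_norm_lt_one k (r := ‖z‖) (by simpa)) ?_
  filter_upwards [eventually_ge_atTop 1] with j hj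
  rw [norm_mul, norm_pow, Complex.norm_real, Real.norm_of_nonneg (by positivity)]
  gcongr
  rw [← Real.rpow_natCast]
  exact Real.rpow_le_rpow_of_exponent_le (Nat.one_le_cast.mpr hj) hk

theorem L1_weight_eq_secondDiff (α τ : ℝ) (hα : α ≠ 1) (b d : ℕ → ℝ)
    (hb : ∀ j : ℕ, b j = (((j : ℝ) + 1) ^ (1 - α) - (j : ℝ) ^ (1 - α)) / Real.Gamma (2 - α))
    (hd0 : d 0 = τ ^ (-α) * b 0)
    (hd : ∀ j : ℕ, 1 ≤ j → d j = τ ^ (-α) * (b j - b (j - 1))) (j : ℕ) :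
    d j = τ ^ (-α) / Real.Gamma (2 - α) *
      (((j + 1 : ℕ) : ℝ) ^ (1 - α) - 2 * (j : ℝ) ^ (1 - α) + ((j - 1 : ℕ) : ℝ) ^ (1 - α)) := by
  rcases j with _ | j
  · have h0 : (0 : ℝ) ^ (1 - α) = 0 := Real.zero_rpow (sub_ne_zero.mpr hα.symm)
    simp only [hd0, hb, Nat.cast_zero, Nat.cast_one, zero_add, Nat.zero_sub, h0]
    ring
  · rw [hd _ j.succ_pos, hb, Nat.add_sub_cancel, hb]
    push_cast
    ring

theorem L1_weights_generating_function_general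
    (α τ : ℝ) (hα : α ∈ Set.Ioo (0:ℝ) 1)
    (b d : ℕ → ℝ)
    (hb : ∀ j : ℕ, b j = (((j : ℝ) + 1) ^ (1 - α) - (j : ℝ) ^ (1 - α)) / Real.Gamma (2 - α))
    (hd0 : d 0 = τ ^ (-α) * b 0)
    (hd : ∀ j : ℕ, 1 ≤ j → d j = τ ^ (-α) * (b j - b (j - 1)))
    (ζ : ℂ) (hζ0 : 0 < ‖ζ‖) (hζ1 : ‖ζ‖ < 1) :
    Summable (fun j : ℕ => ‖(d j : ℂ) * ζ ^ j‖) ∧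
    ∑' j : ℕ, (d j : ℂ) * ζ ^ j =
      ((τ ^ (-α) / Real.Gamma (2 - α) : ℝ) : ℂ) * ((1 - ζ) ^ 2 / ζ) *
        ∑' j : ℕ, (((j : ℝ) ^ (1 - α) : ℝ) : ℂ) * ζ ^ j := by
  set A : ℕ → ℂ := fun j => (((j : ℝ) ^ (1 - α) : ℝ) : ℂ)
  have hA0 : A 0 = 0 := by simp [A, Real.zero_rpow (sub_pos.mpr hα.2).ne']
  have hsum := (hasSum_secondDiff_mul_pow hA0 (norm_pos_iff.mp hζ0)
    (summable_rpow_mul_pow (1 - α) hζ1).hasSum).mul_left ((τ ^ (-α) / Real.Gamma (2 - α) : ℝ) : ℂ)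
  have hd_eq : ∀ j, (d j : ℂ) * ζ ^ j = ((τ ^ (-α) / Real.Gamma (2 - α) : ℝ) : ℂ) *
      ((A (j + 1) - 2 * A j + A (j - 1)) * ζ ^ j) := fun j => by
    rw [L1_weight_eq_secondDiff α τ hα.2.ne b d hb hd0 hd j]
    push_cast [A]
    ring
  simp only [← hd_eq] at hsum
  exact ⟨summable_norm_iff.mpr hsum.summable, by rw [hsum.tsum_eq, mul_assoc]⟩

/-- Generating function of the L1 weights: for `α ∈ (0,1)`, `τ > 0` and `0 < |ζ| < 1`,
the series `∑ d_j^{(α)} ζ^j` converges absolutely and equals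
`(τ^{-α}/Γ(2-α)) ((1-ζ)²/ζ) Li_{α-1}(ζ)`, where
`Li_{α-1}(ζ) = ∑_{j≥1} j^{1-α} ζ^j` (the `j = 0` term below vanishes since `0^{1-α} = 0`). -/
theorem L1_weights_generating_function
    (α τ : ℝ) (hα : α ∈ Set.Ioo (0:ℝ) 1) (hτ : 0 < τ)
    (b d : ℕ → ℝ)
    (hb : ∀ j : ℕ, b j = (((j : ℝ) + 1) ^ (1 - α) - (j : ℝ) ^ (1 - α)) / Real.Gamma (2 - α))
    (hd0 : d 0 = τ ^ (-α) * b 0)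
    (hd : ∀ j : ℕ, 1 ≤ j → d j = τ ^ (-α) * (b j - b (j - 1)))
    (ζ : ℂ) (hζ0 : 0 < ‖ζ‖) (hζ1 : ‖ζ‖ < 1) :
    Summable (fun j : ℕ => ‖(d j : ℂ) * ζ ^ j‖) ∧
    ∑' j : ℕ, (d j : ℂ) * ζ ^ j =
      ((τ ^ (-α) / Real.Gamma (2 - α) : ℝ) : ℂ) * ((1 - ζ) ^ 2 / ζ) *
        ∑' j : ℕ, (((j : ℝ) ^ (1 - α) : ℝ) : ℂ) * ζ ^ j :=
  L1_weights_generating_function_general α τ hα b d hb hd0 hd ζ hζ0 hζ1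
end

section
/- Let θ∈(π/2,π), κ>0, T>0 and β>0. There exists a constant C>0 such that for all t∈(0,T]: 2∫_κ^∞ e^{rt cos θ} r^{β−1} dr + κ^β ∫_{−θ}^{θ} e^{κt cos ψ} dψ ≤ C t^{−β}. -/
open MeasureTheory

/-! On the rays `|e^{zt}| = e^{rt cos θ}` with `cos θ < 0`, so enlarging the ray integral to
`(0, ∞)` gives the Gamma integral `Γ(β) (t |cos θ|)^{-β}`. On the arc the integrand is at most
`e^{κT}`, and a bounded quantity is `O(t^{-β})` on `(0, T]` since `t^{-β} ≥ T^{-β}`. -/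

open Real Set

lemma setIntegral_Ioi_rpow_mul_exp_neg_mul_le {κ a r : ℝ} (hκ : 0 ≤ κ) (ha : 0 < a)
    (hr : 0 < r) :
    ∫ t in Ioi κ, t ^ (a - 1) * exp (-(r * t)) ≤ (1 / r) ^ a * Gamma a := by
  have hGamma := integral_rpow_mul_exp_neg_mul_Ioi ha hr
  have hint : IntegrableOn (fun t : ℝ ↦ t ^ (a - 1) * exp (-(r * t))) (Ioi 0) :=
    Integrable.of_integral_ne_zero <| by rw [hGamma]; exact (by positivity : (0 : ℝ) < _).ne'
  refine hGamma ▸ setIntegral_mono_set hint ?_ (Ioi_subset_Ioi hκ).eventuallyLE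
  filter_upwards [self_mem_ae_restrict measurableSet_Ioi] with t (ht : 0 < t)
  positivity

lemma intervalIntegral_exp_mul_cos_le {b θ : ℝ} (hb : 0 ≤ b) (hθ : 0 ≤ θ) :
    ∫ ψ in (-θ)..θ, exp (b * cos ψ) ≤ 2 * θ * exp b := by
  have hbound : ∀ ψ ∈ Icc (-θ) θ, exp (b * cos ψ) ≤ exp b := fun ψ _ ↦
    exp_le_exp.2 <| mul_le_of_le_one_right hb (cos_le_one ψ)
  calc ∫ ψ in (-θ)..θ, exp (b * cos ψ)
      ≤ ∫ _ in (-θ)..θ, exp b := intervalIntegral.integral_mono_on (by linarith)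
        (Continuous.intervalIntegrable (by fun_prop) _ _) intervalIntegrable_const hbound
    _ = 2 * θ * exp b := by simp only [intervalIntegral.integral_const, smul_eq_mul]; ring

lemma le_mul_rpow_mul_rpow_neg {M t T β : ℝ} (hM : 0 ≤ M) (ht : 0 < t) (htT : t ≤ T)
    (hβ : 0 ≤ β) : M ≤ M * T ^ β * t ^ (-β) := by
  have hratio : 1 ≤ T ^ β * t ^ (-β) := by
    rw [rpow_neg ht.le, ← div_eq_mul_inv, one_le_div (by positivity)]
    exact rpow_le_rpow ht.le htT hβ
  rw [mul_assoc]
  exact le_mul_of_one_le_right hM hratio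

/-- Kernel bound for the contour `Γ_{θ,κ}`: for `θ ∈ (π/2, π)`, `κ > 0`, `T > 0`, `β > 0`
there is `C > 0` with
`2∫_κ^∞ e^{rt cos θ} r^{β-1} dr + κ^β ∫_{-θ}^{θ} e^{κt cos ψ} dψ ≤ C t^{-β}`
for all `t ∈ (0,T]`; the left-hand side is `∫_{Γ_{θ,κ}} |e^{zt}||z|^{β-1}|dz|`. -/
theorem contour_kernel_bound
    (θ κ T β : ℝ) (hθ : θ ∈ Set.Ioo (Real.pi / 2) Real.pi)
    (hκ : 0 < κ) (hT : 0 < T) (hβ : 0 < β) :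
    ∃ C : ℝ, 0 < C ∧
      ∀ t ∈ Set.Ioc (0:ℝ) T,
        2 * (∫ r in Set.Ioi κ, Real.exp (r * t * Real.cos θ) * r ^ (β - 1)) +
          κ ^ β * (∫ ψ in (-θ)..θ, Real.exp (κ * t * Real.cos ψ)) ≤ C * t ^ (-β) := by
  obtain ⟨hθπ2, hθπ⟩ := hθ
  have hθ0 : 0 ≤ θ := by linarith [pi_pos]
  have hcos : 0 < -cos θ := neg_pos.2 (cos_neg_of_pi_div_two_lt_of_lt hθπ2 (by linarith))
  refine ⟨2 * Gamma β * (-cos θ) ^ (-β) + κ ^ β * (2 * θ * exp (κ * T)) * T ^ β,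
    by positivity, ?_⟩
  rintro t ⟨ht, htT⟩
  have hrays : ∫ r in Ioi κ, exp (r * t * cos θ) * r ^ (β - 1)
      ≤ Gamma β * (-cos θ) ^ (-β) * t ^ (-β) :=
    calc ∫ r in Ioi κ, exp (r * t * cos θ) * r ^ (β - 1)
        = ∫ r in Ioi κ, r ^ (β - 1) * exp (-((t * -cos θ) * r)) := by
          congr 1; ext r; ring_nf
      _ ≤ (1 / (t * -cos θ)) ^ β * Gamma β :=
          setIntegral_Ioi_rpow_mul_exp_neg_mul_le hκ.le hβ (by positivity)
      _ = Gamma β * (-cos θ) ^ (-β) * t ^ (-β) := by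
          rw [one_div, inv_rpow (by positivity), ← rpow_neg (by positivity),
            mul_rpow ht.le hcos.le]
          ring
  have harc : κ ^ β * ∫ ψ in (-θ)..θ, exp (κ * t * cos ψ)
      ≤ κ ^ β * (2 * θ * exp (κ * T)) * T ^ β * t ^ (-β) := by
    refine le_trans ?_ (le_mul_rpow_mul_rpow_neg (by positivity) ht htT hβ.le)
    gcongr
    refine (intervalIntegral_exp_mul_cos_le (by positivity) hθ0).trans ?_
    gcongr
  linarith
end
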